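/- arXiv:1310.6928 — 2 statements merged into one kernel-verified Lean document; each statement's English description precedes it below -/
import Mathlib

section
/- Fix T > 0 and n ≥ 1. Let b, ū : [0,T]×ℝ^d → ℝ^d and σ : ℝ^d → ℝ^{d×d} be continuous (with b, σ depending only on x), a(x) = σ(x)σ(x)ᵀ, and h : ℝ^d → ℝ. Suppose v₀, v₁, …, v_n : [0,T]×ℝ^d → ℝ are of class C^{1,2} and satisfy, on [0,T)×ℝ^d: (order 0) ∂_t v₀ + ⟨b − σū, ∇_x v₀⟩ − (1/2)‖σᵀ∇_x v₀‖² − ‖ū‖² = 0 with v₀(T,x) = 2h(x); and for each 1 ≤ k ≤ n, ∂_t v_k + ⟨b − σū, ∇_x v_k⟩ + (1/2) a : ∇²_x v_{k−1} − Σ_{i+j=k, 0 ≤ i < j} ⟨σᵀ∇_x v_i, σᵀ∇_x v_j⟩ − (1/2)‖σᵀ∇_x v_{k/2}‖² 𝟙{k even} = 0 with v_k(T,x) = 0. Then for every ε > 0 the function Ψ^ε_n := Σ_{i=0}^n ε^i v_i satisfies, at every (t,x) ∈ [0,T)×ℝ^d, ∂_t Ψ^ε_n + ⟨b − σū, ∇_x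 Ψ^ε_n⟩ + (ε/2) a : ∇²_x Ψ^ε_n − (1/2)‖σᵀ∇_x Ψ^ε_n‖² − ‖ū‖² = ε^{n+1} (1/2) a : ∇²_x v_n − (1/2) Σ_{0 ≤ i, j ≤ n, i+j ≥ n+1} ε^{i+j} ⟨σᵀ∇_x v_i, σᵀ∇_x v_j⟩; in particular the left-hand side is O(ε^{n+1}) as ε ↓ 0 on any set where the derivatives of v₀, …, v_n are bounded. -/
open Real Filter MeasureTheory Matrix intervalIntegral Set
open scoped BigOperators

noncomputable section

/-- Partial derivative of `f : ℝ^d → ℝ` in the `i`-th coordinate direction. -/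
noncomputable def pder {d : ℕ} (i : Fin d) (f : (Fin d → ℝ) → ℝ) (x : Fin d → ℝ) : ℝ :=
  fderiv ℝ f x (Pi.single i 1)

/-- Spatial gradient `∇_x f`. -/
noncomputable def gradv {d : ℕ} (f : (Fin d → ℝ) → ℝ) (x : Fin d → ℝ) : Fin d → ℝ :=
  fun i => pder i f x

/-- Spatial Hessian `∇²_x f`. -/
noncomputable def hessm {d : ℕ} (f : (Fin d → ℝ) → ℝ) (x : Fin d → ℝ) :
    Matrix (Fin d) (Fin d) ℝ :=
  Matrix.of fun i j => pder i (fun y => pder j f y) x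

/-- Euclidean inner product on `ℝ^d`. -/
def dotp {d : ℕ} (u v : Fin d → ℝ) : ℝ := ∑ i, u i * v i

/-- Matrix contraction `A : B = ∑_{i,j} A_{ij} B_{ij}`. -/
def mdot {d : ℕ} (A B : Matrix (Fin d) (Fin d) ℝ) : ℝ := ∑ i, ∑ j, A i j * B i j

/-- `f(t,x)` is of class `C^{1,2}` on `ℝ × ℝ^d`: continuous, continuously
differentiable in `t` and twice continuously differentiable in `x`. -/
def C12 {d : ℕ} (f : ℝ → (Fin d → ℝ) → ℝ) : Prop :=
  Continuous (fun p : ℝ × (Fin d → ℝ) => f p.1 p.2) ∧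
  (∀ x, Differentiable ℝ (fun s => f s x)) ∧
  Continuous (fun p : ℝ × (Fin d → ℝ) => deriv (fun s => f s p.2) p.1) ∧
  (∀ t, ContDiff ℝ 2 (f t)) ∧
  (∀ i, Continuous (fun p : ℝ × (Fin d → ℝ) => pder i (f p.1) p.2)) ∧
  (∀ i j, Continuous (fun p : ℝ × (Fin d → ℝ) => hessm (f p.1) p.2 i j))

/-- `f(t,x)` is of class `C^1` on `ℝ × ℝ^d`. -/
def C1 {d : ℕ} (f : ℝ → (Fin d → ℝ) → ℝ) : Prop :=
  Continuous (fun p : ℝ × (Fin d → ℝ) => f p.1 p.2) ∧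
  (∀ x, Differentiable ℝ (fun s => f s x)) ∧
  Continuous (fun p : ℝ × (Fin d → ℝ) => deriv (fun s => f s p.2) p.1) ∧
  (∀ t, Differentiable ℝ (f t)) ∧
  (∀ i, Continuous (fun p : ℝ × (Fin d → ℝ) => pder i (f p.1) p.2))

/-!
Substituting `Ψ = ∑ εⁱ vᵢ`, every term of the operator is linear in `Ψ` except
`½‖σᵀ∇Ψ‖²`, which becomes the double sum `½ ∑ ε^(i+j) ⟨σᵀ∇vᵢ, σᵀ∇vⱼ⟩`. Grouping its terms
with `i + j ≤ n` by `k = i + j`, the coefficient of `εᵏ` is the left-hand side of the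
order-`k` equation, because by symmetry the sum over `i < j` plus half the diagonal term is half
the full antidiagonal sum. The diffusion term `ε · ½ a : ∇²v_k` is absorbed by order `k + 1`, so
only `ε^(n+1) · ½ a : ∇²vₙ` and the terms with `i + j > n` survive.
-/

section SumIdentities
open Finset

theorem sum_range_sum_range_ite_add_le {M : Type*} [AddCommMonoid M] (n : ℕ) (F : ℕ → ℕ → M) :
    ∑ i ∈ range (n + 1), ∑ j ∈ range (n + 1), (if i + j ≤ n then F i j else 0)
      = ∑ k ∈ range (n + 1), ∑ i ∈ range (k + 1), F i (k - i) := by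
  have hinner : ∀ i ∈ range (n + 1),
      ∑ j ∈ range (n + 1), (if i + j ≤ n then F i j else 0)
        = ∑ k ∈ Ico i (n + 1), F i (k - i) := by
    intro i hi
    rw [← sum_filter, sum_Ico_eq_sum_range]
    refine sum_congr ?_ fun j _ => by rw [Nat.add_sub_cancel_left]
    ext j; simp only [mem_filter, Finset.mem_range]; omega
  rw [sum_congr rfl hinner]
  exact sum_comm' fun i k => by simp only [Finset.mem_range, Finset.mem_Ico]; omega

theorem sum_range_sum_range_pow_mul {R : Type*} [CommSemiring R] (n : ℕ) (ε : R)
    (Q : ℕ → ℕ → R) :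
    ∑ i ∈ range (n + 1), ∑ j ∈ range (n + 1), ε ^ (i + j) * Q i j
      = ∑ k ∈ range (n + 1), ε ^ k * ∑ i ∈ range (k + 1), Q i (k - i)
        + ∑ i ∈ range (n + 1), ∑ j ∈ range (n + 1),
            (if n + 1 ≤ i + j then ε ^ (i + j) * Q i j else 0) := by
  have hlow : ∑ k ∈ range (n + 1), ε ^ k * ∑ i ∈ range (k + 1), Q i (k - i)
      = ∑ i ∈ range (n + 1), ∑ j ∈ range (n + 1),
          (if i + j ≤ n then ε ^ (i + j) * Q i j else 0) := by
    rw [sum_range_sum_range_ite_add_le]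
    refine sum_congr rfl fun k _ => ?_
    rw [mul_sum]
    exact sum_congr rfl fun i hi => by
      rw [Nat.add_sub_cancel' (Nat.lt_succ_iff.mp (Finset.mem_range.mp hi))]
  rw [hlow, ← sum_add_distrib]
  refine sum_congr rfl fun i _ => ?_
  rw [← sum_add_distrib]
  refine sum_congr rfl fun j _ => ?_
  split_ifs <;> first | omega | simp

variable {K : Type*} [Field K]

theorem sum_range_half_add_ite_even [CharZero K] (k : ℕ) (f : ℕ → ℕ → K)
    (hf : ∀ i j, f i j = f j i) :
    ∑ i ∈ range ((k + 1) / 2), f i (k - i) + (if k % 2 = 0 then 1 / 2 * f (k / 2) (k / 2) else 0)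
      = 1 / 2 * ∑ i ∈ range (k + 1), f i (k - i) := by
  set c := (k + 1) / 2 with hc
  have hsplit : ∑ i ∈ range (k + 1), f i (k - i)
      = ∑ i ∈ range c, f i (k - i) + ∑ i ∈ range (k + 1 - c), f i (k - i) := by
    have hadd := sum_range_add (fun i => f i (k - i)) c (k + 1 - c)
    rw [Nat.add_sub_cancel' (by omega)] at hadd
    rw [hadd]
    congr 1
    conv_rhs => rw [← sum_range_reflect]
    refine sum_congr rfl fun i hi => ?_
    rw [Finset.mem_range] at hi
    rw [hf]; congr 1 <;> omega
  rcases Nat.even_or_odd k with hk | hk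
  · rw [Nat.even_iff] at hk
    rw [if_pos hk, hsplit, show k + 1 - c = c + 1 by omega, sum_range_succ,
      show k - c = c by omega, show k / 2 = c by omega]
    ring
  · rw [Nat.odd_iff] at hk
    rw [if_neg (by omega), hsplit, show k + 1 - c = c by omega]
    ring

theorem sum_range_pow_mul_add_half_pow_mul (n : ℕ) (ε U : K) (R H : ℕ → K) (h0 : R 0 = U)
    (hR : ∀ k < n, R (k + 1) = -(1 / 2 * H k)) :
    ∑ k ∈ range (n + 1), ε ^ k * R k + ε / 2 * ∑ k ∈ range (n + 1), ε ^ k * H k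
      = U + ε ^ (n + 1) * (1 / 2 * H n) := by
  induction n with
  | zero => simp only [zero_add, range_one, sum_singleton, pow_zero, one_mul, pow_one, h0]; ring
  | succ n ih =>
    rw [sum_range_succ, sum_range_succ _ (n + 1), hR n n.lt_succ_self]
    linear_combination ih fun k hk => hR k (by omega)

/-- `D`, `L`, `H`, `Q i j` stand for `∂ₜvₖ`, `⟨b - σū, ∇vₖ⟩`, `a : ∇²vₖ` and
`⟨σᵀ∇vᵢ, σᵀ∇vⱼ⟩` at a fixed point, and `U` for `‖ū‖²`. -/
theorem sum_range_pow_mul_hierarchy [CharZero K] (n : ℕ) (ε U : K) (D L H : ℕ → K)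
    (Q : ℕ → ℕ → K) (hQ : ∀ i j, Q i j = Q j i)
    (h0 : D 0 + L 0 - 1 / 2 * Q 0 0 - U = 0)
    (hk : ∀ k, 1 ≤ k → k ≤ n →
      D k + L k + 1 / 2 * H (k - 1) - ∑ i ∈ range ((k + 1) / 2), Q i (k - i)
        - (if k % 2 = 0 then 1 / 2 * Q (k / 2) (k / 2) else 0) = 0) :
    ∑ k ∈ range (n + 1), ε ^ k * D k + ∑ k ∈ range (n + 1), ε ^ k * L k
        + ε / 2 * ∑ k ∈ range (n + 1), ε ^ k * H k
        - 1 / 2 * ∑ i ∈ range (n + 1), ∑ j ∈ range (n + 1), ε ^ (i + j) * Q i j - U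
      = ε ^ (n + 1) * (1 / 2 * H n)
        - 1 / 2 * ∑ i ∈ range (n + 1), ∑ j ∈ range (n + 1),
            (if n + 1 ≤ i + j then ε ^ (i + j) * Q i j else 0) := by
  have hrec := sum_range_pow_mul_add_half_pow_mul n ε U
    (fun k => D k + L k - 1 / 2 * ∑ i ∈ range (k + 1), Q i (k - i)) H
    (by simp only [zero_add, range_one, sum_singleton]; linear_combination h0)
    (fun k hkn => by
      have hk' := hk (k + 1) (by omega) (by omega)
      rw [Nat.add_sub_cancel] at hk'
      linear_combination hk' + sum_range_half_add_ite_even (k + 1) Q hQ)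
  simp only [mul_sub, mul_add, sum_add_distrib, sum_sub_distrib, ← mul_sum,
    mul_left_comm _ (1 / 2 : K)] at hrec
  rw [sum_range_sum_range_pow_mul]
  linear_combination hrec

end SumIdentities

section Derivatives
variable {d : ℕ} {ι : Type*} {s : Finset ι}

theorem pder_sum_const_mul (c : ι → ℝ) (f : ι → (Fin d → ℝ) → ℝ) (x : Fin d → ℝ)
    (hf : ∀ i ∈ s, DifferentiableAt ℝ (f i) x) (j : Fin d) :
    pder j (fun y => ∑ i ∈ s, c i * f i y) x = ∑ i ∈ s, c i * pder j (f i) x := by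
  rw [pder, fderiv_fun_sum fun i hi => (hf i hi).const_mul (c i),
    Finset.sum_congr rfl fun i hi => fderiv_const_mul (hf i hi) (c i)]
  simp [pder]

theorem ContDiff.differentiable_pder {f : (Fin d → ℝ) → ℝ} (hf : ContDiff ℝ 2 f) (j : Fin d) :
    Differentiable ℝ (pder j f) := by
  unfold pder
  exact (ContinuousLinearMap.apply ℝ ℝ (Pi.single j 1)).differentiable.comp
    ((hf.fderiv_right (m := 1) le_rfl).differentiable one_ne_zero)

theorem gradv_sum_const_mul (c : ι → ℝ) (f : ι → (Fin d → ℝ) → ℝ) (x : Fin d → ℝ)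
    (hf : ∀ i ∈ s, DifferentiableAt ℝ (f i) x) :
    gradv (fun y => ∑ i ∈ s, c i * f i y) x = ∑ i ∈ s, c i • gradv (f i) x := by
  ext j
  simp only [gradv, pder_sum_const_mul c f x hf, Finset.sum_apply, Pi.smul_apply, smul_eq_mul]

theorem hessm_sum_const_mul (c : ι → ℝ) (f : ι → (Fin d → ℝ) → ℝ) (x : Fin d → ℝ)
    (hf : ∀ i ∈ s, ContDiff ℝ 2 (f i)) :
    hessm (fun y => ∑ i ∈ s, c i * f i y) x = ∑ i ∈ s, c i • hessm (f i) x := by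
  have hpder : ∀ j, pder j (fun y => ∑ i ∈ s, c i * f i y)
      = fun y => ∑ i ∈ s, c i * pder j (f i) y := fun j => funext fun y =>
    pder_sum_const_mul c f y
      (fun i hi => ((hf i hi).differentiable (by norm_num)).differentiableAt) j
  ext a b
  simp only [hessm, Matrix.of_apply, hpder, Matrix.sum_apply, Matrix.smul_apply, smul_eq_mul]
  exact pder_sum_const_mul c (fun i => pder b (f i)) x
    (fun i hi => ((hf i hi).differentiable_pder b).differentiableAt) a

end Derivatives

section Contractions
variable {d : ℕ} {ι : Type*}

theorem dotp_comm (u w : Fin d → ℝ) : dotp u w = dotp w u := dotProduct_comm u w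

theorem dotp_sum_smul (u : Fin d → ℝ) (s : Finset ι) (c : ι → ℝ) (w : ι → Fin d → ℝ) :
    dotp u (∑ i ∈ s, c i • w i) = ∑ i ∈ s, c i * dotp u (w i) := by
  simp only [dotp, ← dotProduct.eq_1, dotProduct_sum, dotProduct_smul, smul_eq_mul]

theorem dotp_sum_smul_sum_smul (s : Finset ι) (c : ι → ℝ) (u w : ι → Fin d → ℝ) :
    dotp (∑ i ∈ s, c i • u i) (∑ j ∈ s, c j • w j)
      = ∑ i ∈ s, ∑ j ∈ s, c i * c j * dotp (u i) (w j) := by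
  simp only [dotp, ← dotProduct.eq_1]
  rw [sum_dotProduct]
  simp only [dotProduct_sum, smul_dotProduct, dotProduct_smul, smul_eq_mul, mul_assoc]
  exact Finset.sum_congr rfl fun _ _ => Finset.sum_congr rfl fun _ _ => mul_left_comm _ _ _

theorem mdot_sum_smul (A : Matrix (Fin d) (Fin d) ℝ) (s : Finset ι) (c : ι → ℝ)
    (B : ι → Matrix (Fin d) (Fin d) ℝ) :
    mdot A (∑ i ∈ s, c i • B i) = ∑ i ∈ s, c i * mdot A (B i) := by
  simp only [mdot, Matrix.sum_apply, Matrix.smul_apply, smul_eq_mul, Finset.mul_sum]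
  conv_rhs => rw [Finset.sum_comm]
  refine Finset.sum_congr rfl fun a _ => ?_
  rw [Finset.sum_comm]
  exact Finset.sum_congr rfl fun i _ => Finset.sum_congr rfl fun b _ => by ring

end Contractions

theorem stmt_2_general (d : ℕ) (T : ℝ) (n : ℕ)
    (b : (Fin d → ℝ) → (Fin d → ℝ))
    (ubar : ℝ → (Fin d → ℝ) → (Fin d → ℝ))
    (σ : (Fin d → ℝ) → Matrix (Fin d) (Fin d) ℝ)
    (v : ℕ → ℝ → (Fin d → ℝ) → ℝ)
    (hvreg : ∀ k ≤ n, C12 (v k))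
    (hv₀pde : ∀ t x, 0 ≤ t → t < T →
      deriv (fun s => v 0 s x) t
        + dotp (b x - (σ x) *ᵥ (ubar t x)) (gradv (v 0 t) x)
        - (1 / 2) * dotp ((σ x)ᵀ *ᵥ gradv (v 0 t) x) ((σ x)ᵀ *ᵥ gradv (v 0 t) x)
        - dotp (ubar t x) (ubar t x) = 0)
    (hvkpde : ∀ k, 1 ≤ k → k ≤ n → ∀ t x, 0 ≤ t → t < T →
      deriv (fun s => v k s x) t
        + dotp (b x - (σ x) *ᵥ (ubar t x)) (gradv (v k t) x)
        + (1 / 2) * mdot (σ x * (σ x)ᵀ) (hessm (v (k - 1) t) x)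
        - (∑ i ∈ Finset.range ((k + 1) / 2),
            dotp ((σ x)ᵀ *ᵥ gradv (v i t) x) ((σ x)ᵀ *ᵥ gradv (v (k - i) t) x))
        - (if k % 2 = 0 then
            (1 / 2) * dotp ((σ x)ᵀ *ᵥ gradv (v (k / 2) t) x)
              ((σ x)ᵀ *ᵥ gradv (v (k / 2) t) x)
          else 0) = 0) :
    ∀ ε : ℝ, 0 < ε → ∀ t x, 0 ≤ t → t < T →
      deriv (fun s => ∑ i ∈ Finset.range (n + 1), ε ^ i * v i s x) t
        + dotp (b x - (σ x) *ᵥ (ubar t x))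
            (gradv (fun y => ∑ i ∈ Finset.range (n + 1), ε ^ i * v i t y) x)
        + (ε / 2) * mdot (σ x * (σ x)ᵀ)
            (hessm (fun y => ∑ i ∈ Finset.range (n + 1), ε ^ i * v i t y) x)
        - (1 / 2) * dotp
            ((σ x)ᵀ *ᵥ gradv (fun y => ∑ i ∈ Finset.range (n + 1), ε ^ i * v i t y) x)
            ((σ x)ᵀ *ᵥ gradv (fun y => ∑ i ∈ Finset.range (n + 1), ε ^ i * v i t y) x)
        - dotp (ubar t x) (ubar t x)
      = ε ^ (n + 1) * ((1 / 2) * mdot (σ x * (σ x)ᵀ) (hessm (v n t) x))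
        - (1 / 2) * ∑ i ∈ Finset.range (n + 1), ∑ j ∈ Finset.range (n + 1),
            (if n + 1 ≤ i + j then
              ε ^ (i + j) * dotp ((σ x)ᵀ *ᵥ gradv (v i t) x) ((σ x)ᵀ *ᵥ gradv (v j t) x)
            else 0) := by
  intro ε _ t x ht htT
  have hreg : ∀ i ∈ Finset.range (n + 1), C12 (v i) :=
    fun i hi => hvreg i (Nat.lt_succ_iff.mp (Finset.mem_range.mp hi))
  have hC2 : ∀ i ∈ Finset.range (n + 1), ContDiff ℝ 2 (v i t) :=
    fun i hi => (hreg i hi).2.2.2.1 t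
  have hderiv : deriv (fun s => ∑ i ∈ Finset.range (n + 1), ε ^ i * v i s x) t
      = ∑ i ∈ Finset.range (n + 1), ε ^ i * deriv (fun s => v i s x) t := by
    have hdiff i (hi : i ∈ Finset.range (n + 1)) : DifferentiableAt ℝ (fun s => v i s x) t :=
      ((hreg i hi).2.1 x).differentiableAt
    rw [deriv_fun_sum fun i hi => (hdiff i hi).const_mul (ε ^ i)]
    exact Finset.sum_congr rfl fun i hi => deriv_const_mul _ (hdiff i hi)
  rw [hderiv, gradv_sum_const_mul _ _ x
      fun i hi => ((hC2 i hi).differentiable (by norm_num)).differentiableAt,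
    hessm_sum_const_mul _ _ x hC2, mdot_sum_smul]
  simp only [mulVec_sum, mulVec_smul]
  rw [dotp_sum_smul_sum_smul, dotp_sum_smul]
  simp only [← pow_add]
  exact sum_range_pow_mul_hierarchy n ε _ _ _ _ _ (fun i j => dotp_comm _ _)
    (hv₀pde t x ht htT) fun k hk hkn => hvkpde k hk hkn t x ht htT

/-- Full hierarchy of equations obtained by matching powers of `ε`:
if `v₀, …, v_n` solve the order-`0` Hamilton–Jacobi equation and the order-`k`
transport equations, then `Ψ^ε_n = ∑_{i=0}^n ε^i v_i` satisfies the log-transformed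
second-moment PDE up to an explicit `O(ε^{n+1})` remainder. -/
theorem stmt_2 (d : ℕ) (T : ℝ) (hT : 0 < T) (n : ℕ) (hn : 1 ≤ n)
    (b : (Fin d → ℝ) → (Fin d → ℝ))
    (ubar : ℝ → (Fin d → ℝ) → (Fin d → ℝ))
    (σ : (Fin d → ℝ) → Matrix (Fin d) (Fin d) ℝ)
    (h : (Fin d → ℝ) → ℝ)
    (hb : Continuous b)
    (hubar : Continuous (fun p : ℝ × (Fin d → ℝ) => ubar p.1 p.2))
    (hσ : Continuous σ)
    (v : ℕ → ℝ → (Fin d → ℝ) → ℝ)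
    (hvreg : ∀ k ≤ n, C12 (v k))
    (hv₀pde : ∀ t x, 0 ≤ t → t < T →
      deriv (fun s => v 0 s x) t
        + dotp (b x - (σ x) *ᵥ (ubar t x)) (gradv (v 0 t) x)
        - (1 / 2) * dotp ((σ x)ᵀ *ᵥ gradv (v 0 t) x) ((σ x)ᵀ *ᵥ gradv (v 0 t) x)
        - dotp (ubar t x) (ubar t x) = 0)
    (hv₀T : ∀ x, v 0 T x = 2 * h x)
    (hvkpde : ∀ k, 1 ≤ k → k ≤ n → ∀ t x, 0 ≤ t → t < T →
      deriv (fun s => v k s x) t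
        + dotp (b x - (σ x) *ᵥ (ubar t x)) (gradv (v k t) x)
        + (1 / 2) * mdot (σ x * (σ x)ᵀ) (hessm (v (k - 1) t) x)
        - (∑ i ∈ Finset.range ((k + 1) / 2),
            dotp ((σ x)ᵀ *ᵥ gradv (v i t) x) ((σ x)ᵀ *ᵥ gradv (v (k - i) t) x))
        - (if k % 2 = 0 then
            (1 / 2) * dotp ((σ x)ᵀ *ᵥ gradv (v (k / 2) t) x)
              ((σ x)ᵀ *ᵥ gradv (v (k / 2) t) x)
          else 0) = 0)
    (hvkT : ∀ k, 1 ≤ k → k ≤ n → ∀ x, v k T x = 0) :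
    ∀ ε : ℝ, 0 < ε → ∀ t x, 0 ≤ t → t < T →
      deriv (fun s => ∑ i ∈ Finset.range (n + 1), ε ^ i * v i s x) t
        + dotp (b x - (σ x) *ᵥ (ubar t x))
            (gradv (fun y => ∑ i ∈ Finset.range (n + 1), ε ^ i * v i t y) x)
        + (ε / 2) * mdot (σ x * (σ x)ᵀ)
            (hessm (fun y => ∑ i ∈ Finset.range (n + 1), ε ^ i * v i t y) x)
        - (1 / 2) * dotp
            ((σ x)ᵀ *ᵥ gradv (fun y => ∑ i ∈ Finset.range (n + 1), ε ^ i * v i t y) x)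
            ((σ x)ᵀ *ᵥ gradv (fun y => ∑ i ∈ Finset.range (n + 1), ε ^ i * v i t y) x)
        - dotp (ubar t x) (ubar t x)
      = ε ^ (n + 1) * ((1 / 2) * mdot (σ x * (σ x)ᵀ) (hessm (v n t) x))
        - (1 / 2) * ∑ i ∈ Finset.range (n + 1), ∑ j ∈ Finset.range (n + 1),
            (if n + 1 ≤ i + j then
              ε ^ (i + j) * dotp ((σ x)ᵀ *ᵥ gradv (v i t) x) ((σ x)ᵀ *ᵥ gradv (v j t) x)
            else 0) :=
  stmt_2_general d T n b ubar σ v hvreg hv₀pde hvkpde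
end
end

section
/- Fix T > 0 and (t,x) ∈ [0,T]×ℝ^d. Let b : ℝ^d → ℝ^d and σ : ℝ^d → ℝ^{d×d} be continuous with a(y) = σ(y)σ(y)ᵀ symmetric positive definite for every y, and let h : ℝ^d → ℝ. Let Ū : [0,T]×ℝ^d → ℝ be a classical subsolution: Ū is continuously differentiable, Ū_t + ⟨b(y), ∇_x Ū⟩ − (1/2)‖σ(y)ᵀ∇_x Ū‖² ≥ 0 on [0,T]×ℝ^d, and Ū(T,·) ≤ h. Define the importance sampling control ū(s,y) := −σ(y)ᵀ∇_x Ū(s,y) and set v₀(t,x) := inf over absolutely continuous φ : [t,T] → ℝ^d with φ(t) = x of ∫_t^T [ (1/2)‖φ̇(s) − (b(φ(s)) − σ(φ(s))ū(s,φ(s)))‖²_{a^{-1}(φ(s))} − ‖ū(s,φ(s))‖² ] ds + 2h(φ(T)), and G(t,x) := inf over the same class of paths of S_{tT}(φ) + h(φ(T)), where S_{tT}(φ) = ∫_t^T (1/2)‖φ̇(s) − b(φ(s))‖²_{a^{-1}(φ(s))} ds. Then v₀(t,x) ≥ G(t,x) + Ū(t,x). -/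
open Real Filter MeasureTheory Matrix intervalIntegral Set
open scoped BigOperators

noncomputable section

/-! Fix an admissible path `φ` and write `p = ∇ₓŪ(s, φ s)`, so that `ū = -σᵀp` and
`b - σū = b + a p`. Completing the square in the `a⁻¹`-norm shows that the integrand of `v₀`
equals the integrand of `S_{tT}` minus `⟨φ̇ - b, p⟩ + ½‖σᵀp‖²`, and by the subsolution inequality
this is at least the integrand of `S_{tT}` minus `d/ds Ū(s, φ s) = Ū_t + ⟨φ̇, p⟩`. As `φ` is
absolutely continuous and `Ū` is `C¹`, the function `s ↦ Ū(s, φ s)` is absolutely continuous, so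
this derivative integrates to `Ū(T, φ T) - Ū(t, x) ≤ h(φ T) - Ū(t, x)`. Hence every value in the
set defining `v₀` dominates `Ū(t, x)` plus a value in the set defining `G`. -/

namespace AbsolutelyContinuousOnInterval

variable {X Y : Type*} [PseudoMetricSpace X] [PseudoMetricSpace Y] {a b : ℝ}

theorem of_dist_le_mul {f : ℝ → X} {g : ℝ → Y} (hg : AbsolutelyContinuousOnInterval g a b)
    (K : ℝ) (hfg : ∀ s ∈ uIcc a b, ∀ u ∈ uIcc a b, dist (f s) (f u) ≤ K * dist (g s) (g u)) :
    AbsolutelyContinuousOnInterval f a b := by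
  unfold AbsolutelyContinuousOnInterval at hg ⊢
  refine squeeze_zero' (.of_forall fun _ => Finset.sum_nonneg fun _ _ => dist_nonneg) ?_
    (by simpa using hg.const_mul K)
  rw [eventually_inf_principal]
  filter_upwards with E hE
  rw [Finset.mul_sum]
  exact Finset.sum_le_sum fun i hi => hfg _ (hE.1 i hi).1 _ (hE.1 i hi).2

theorem prodMk {f : ℝ → X} {g : ℝ → Y} (hf : AbsolutelyContinuousOnInterval f a b)
    (hg : AbsolutelyContinuousOnInterval g a b) :
    AbsolutelyContinuousOnInterval (fun s => (f s, g s)) a b := by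
  unfold AbsolutelyContinuousOnInterval at hf hg ⊢
  refine squeeze_zero (fun _ => Finset.sum_nonneg fun _ _ => dist_nonneg) (fun E => ?_)
    (by simpa using hf.add hg)
  rw [← Finset.sum_add_distrib]
  exact Finset.sum_le_sum fun i _ => max_le_add_of_nonneg dist_nonneg dist_nonneg

theorem _root_.LipschitzOnWith.comp_absolutelyContinuousOnInterval {F : X → Y} {K : NNReal}
    {S : Set X} (hF : LipschitzOnWith K F S) {g : ℝ → X}
    (hg : AbsolutelyContinuousOnInterval g a b) (hgS : MapsTo g (uIcc a b) S) :
    AbsolutelyContinuousOnInterval (fun s => F (g s)) a b :=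
  hg.of_dist_le_mul K fun _ hs _ hu => hF.dist_le_mul _ (hgS hs) _ (hgS hu)

theorem integral_eq_sub_of_ae_hasDerivAt {g F : ℝ → ℝ} (hab : a ≤ b)
    (hg : AbsolutelyContinuousOnInterval g a b)
    (hF : ∀ᵐ s, s ∈ Ioo a b → HasDerivAt g (F s) s) :
    IntervalIntegrable F volume a b ∧ ∫ s in a..b, F s = g b - g a := by
  have hderiv : ∀ᵐ s, s ∈ uIoc a b → deriv g s = F s := by
    filter_upwards [hF, Measure.ae_ne volume b] with s hs hsb hmem
    rw [uIoc_of_le hab] at hmem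
    exact (hs ⟨hmem.1, lt_of_le_of_ne hmem.2 hsb⟩).deriv
  refine ⟨hg.intervalIntegrable_deriv.congr_ae ?_, ?_⟩
  · exact (ae_restrict_iff' measurableSet_uIoc).2 hderiv
  · rw [← hg.integral_deriv_eq_sub]
    exact (intervalIntegral.integral_congr_ae hderiv).symm

end AbsolutelyContinuousOnInterval

section Path

variable {E : Type*} [NormedAddCommGroup E] [NormedSpace ℝ E]
  {φ φ' : ℝ → E} {x : E} {a b : ℝ}

theorem absolutelyContinuousOnInterval_of_eq_add_integral (hab : a ≤ b)
    (hφ : ∀ s ∈ Icc a b, φ s = x + ∫ u in a..s, φ' u) (hφ' : IntervalIntegrable φ' volume a b) :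
    AbsolutelyContinuousOnInterval φ a b := by
  have hsub : ∀ s ∈ Icc a b, IntervalIntegrable φ' volume a s := fun s hs =>
    hφ'.mono_set (uIcc_subset_uIcc left_mem_uIcc (by rwa [uIcc_of_le hab]))
  refine AbsolutelyContinuousOnInterval.of_dist_le_mul
    (hφ'.norm.absolutelyContinuousOnInterval_intervalIntegral left_mem_uIcc) 1 fun s hs u hu => ?_
  rw [uIcc_of_le hab] at hs hu
  rw [one_mul, dist_eq_norm, dist_eq_norm, hφ s hs, hφ u hu, add_sub_add_left_eq_sub,
    integral_interval_sub_left (hsub s hs) (hsub u hu),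
    integral_interval_sub_left (hsub s hs).norm (hsub u hu).norm, Real.norm_eq_abs]
  exact intervalIntegral.norm_integral_le_abs_integral_norm

theorem ae_hasDerivAt_of_eq_add_integral [CompleteSpace E]
    (hφ : ∀ s ∈ Icc a b, φ s = x + ∫ u in a..s, φ' u) (hφ' : IntervalIntegrable φ' volume a b) :
    ∀ᵐ s, s ∈ Ioo a b → HasDerivAt φ (φ' s) s := by
  filter_upwards [hφ'.ae_hasDerivAt_integral] with s hs hmem
  have hab : a ≤ b := (hmem.1.trans hmem.2).le
  have hs' := hs (by rw [uIcc_of_le hab]; exact Ioo_subset_Icc_self hmem) a left_mem_uIcc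
  refine (hs'.const_add x).congr_of_eventuallyEq ?_
  filter_upwards [Ioo_mem_nhds hmem.1 hmem.2] with u hu using hφ u (Ioo_subset_Icc_self hu)

end Path

theorem fderiv_apply_eq_dotp {d : ℕ} (f : (Fin d → ℝ) → ℝ) (z v : Fin d → ℝ) :
    fderiv ℝ f z v = dotp v (gradv f z) := by
  have hv : v = ∑ i, v i • Pi.single i (1 : ℝ) := by
    ext j
    simp [Pi.single_apply]
  conv_lhs => rw [hv]
  simp [dotp, gradv, pder]

namespace C1

variable {d : ℕ} {U : ℝ → (Fin d → ℝ) → ℝ}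

theorem continuous_gradv (hU : C1 U) :
    Continuous (fun p : ℝ × (Fin d → ℝ) => gradv (U p.1) p.2) :=
  continuous_pi hU.2.2.2.2

theorem hasStrictFDerivAt (hU : C1 U) (p : ℝ × (Fin d → ℝ)) :
    HasStrictFDerivAt (fun q : ℝ × (Fin d → ℝ) => U q.1 q.2)
      (((1 : ℝ →L[ℝ] ℝ).smulRight (deriv (fun r => U r p.2) p.1)).coprod
        (fderiv ℝ (U p.1) p.2)) p := by
  refine hasStrictFDerivAt_uncurry_coprod (f := U)
    (f₁ := fun s y => (1 : ℝ →L[ℝ] ℝ).smulRight (deriv (fun r => U r y) s))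
    (f₂ := fun s y => fderiv ℝ (U s) y)
    (.of_forall fun q => (hU.2.1 q.2 q.1).hasDerivAt.hasFDerivAt)
    (.of_forall fun q => (hU.2.2.2.1 q.1 q.2).hasFDerivAt) ?_ ?_
  · refine (continuous_clm_apply.2 fun r => ?_).continuousAt
    change Continuous fun q : ℝ × (Fin d → ℝ) =>
      (1 : ℝ →L[ℝ] ℝ).smulRight (deriv (fun r => U r q.2) q.1) r
    simp only [ContinuousLinearMap.smulRight_apply, one_apply_eq_self, smul_eq_mul]
    exact continuous_const.mul hU.2.2.1
  · refine (continuous_clm_apply.2 fun v => ?_).continuousAt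
    change Continuous fun q : ℝ × (Fin d → ℝ) => fderiv ℝ (U q.1) q.2 v
    simp only [fderiv_apply_eq_dotp]
    exact continuous_const.dotProduct hU.continuous_gradv

theorem hasDerivAt_comp (hU : C1 U) {ψ : ℝ → Fin d → ℝ} {w : Fin d → ℝ} {s : ℝ}
    (hψ : HasDerivAt ψ w s) :
    HasDerivAt (fun u => U u (ψ u))
      (deriv (fun r => U r (ψ s)) s + dotp w (gradv (U s) (ψ s))) s := by
  have := (hU.hasStrictFDerivAt (s, ψ s)).hasFDerivAt.comp_hasDerivAt s
    ((hasDerivAt_id s).prodMk hψ)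
  simp only [Function.comp_def, ContinuousLinearMap.coprod_apply,
    ContinuousLinearMap.smulRight_apply, fderiv_apply_eq_dotp] at this
  simpa using this

theorem locallyLipschitz (hU : C1 U) :
    LocallyLipschitz (fun q : ℝ × (Fin d → ℝ) => U q.1 q.2) :=
  fun p => (hU.hasStrictFDerivAt p).exists_lipschitzOnWith

theorem absolutelyContinuousOnInterval_comp (hU : C1 U) {ψ : ℝ → Fin d → ℝ} {a b : ℝ}
    (hψ : AbsolutelyContinuousOnInterval ψ a b) :
    AbsolutelyContinuousOnInterval (fun s => U s (ψ s)) a b := by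
  have hid : AbsolutelyContinuousOnInterval (fun s : ℝ => s) a b :=
    (LipschitzWith.id.lipschitzOnWith (s := uIcc a b)).absolutelyContinuousOnInterval
  have hγ : AbsolutelyContinuousOnInterval (fun s => (s, ψ s)) a b := hid.prodMk hψ
  obtain ⟨K, hK⟩ :=
    (hU.locallyLipschitz.locallyLipschitzOn (s := (fun s => (s, ψ s)) '' uIcc a b))
      |>.exists_lipschitzOnWith_of_compact (isCompact_uIcc.image_of_continuousOn hγ.continuousOn)
  exact (hK.comp_absolutelyContinuousOnInterval hγ (mapsTo_image _ _) :)

theorem integral_deriv_comp_eq_sub {φ φ' : ℝ → Fin d → ℝ} {x : Fin d → ℝ} {a b : ℝ} (hU : C1 U)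
    (hab : a ≤ b) (hφ : ∀ s ∈ Icc a b, φ s = x + ∫ u in a..s, φ' u)
    (hφ' : IntervalIntegrable φ' volume a b) :
    IntervalIntegrable (fun s => deriv (fun r => U r (φ s)) s + dotp (φ' s) (gradv (U s) (φ s)))
      volume a b ∧
    ∫ s in a..b, (deriv (fun r => U r (φ s)) s + dotp (φ' s) (gradv (U s) (φ s)))
      = U b (φ b) - U a (φ a) :=
  AbsolutelyContinuousOnInterval.integral_eq_sub_of_ae_hasDerivAt hab
    (hU.absolutelyContinuousOnInterval_comp
      (absolutelyContinuousOnInterval_of_eq_add_integral hab hφ hφ'))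
    ((ae_hasDerivAt_of_eq_add_integral hφ hφ').mono fun _ hs hmem => hU.hasDerivAt_comp (hs hmem))

end C1

theorem Matrix.dotProduct_inv_mulVec_sub_mulVec {n : Type*} [Fintype n] [DecidableEq n]
    {a : Matrix n n ℝ} (ha : a.IsSymm) (hdet : IsUnit a.det) (v p : n → ℝ) :
    (v - a *ᵥ p) ⬝ᵥ (a⁻¹ *ᵥ (v - a *ᵥ p))
      = v ⬝ᵥ (a⁻¹ *ᵥ v) - 2 * (v ⬝ᵥ p) + p ⬝ᵥ (a *ᵥ p) := by
  have hcancel : a⁻¹ *ᵥ (a *ᵥ p) = p := by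
    rw [mulVec_mulVec, nonsing_inv_mul _ hdet, one_mulVec]
  have hcross : (a *ᵥ p) ⬝ᵥ (a⁻¹ *ᵥ v) = v ⬝ᵥ p := by
    rw [dotProduct_mulVec, ← mulVec_transpose, transpose_nonsing_inv, ha.eq, hcancel,
      dotProduct_comm]
  rw [mulVec_sub, hcancel, sub_dotProduct, dotProduct_sub, dotProduct_sub, hcross,
    dotProduct_comm (a *ᵥ p) p]
  ring

theorem Matrix.mulVec_transpose_dotProduct_self {n : Type*} [Fintype n] (σ : Matrix n n ℝ)
    (p : n → ℝ) : (σᵀ *ᵥ p) ⬝ᵥ (σᵀ *ᵥ p) = p ⬝ᵥ ((σ * σᵀ) *ᵥ p) := by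
  rw [dotProduct_mulVec, vecMul_transpose, mulVec_mulVec, dotProduct_comm]

theorem tilted_cost_eq {d : ℕ} (σ : Matrix (Fin d) (Fin d) ℝ) (hσ : (σ * σᵀ).PosDef)
    (w c p : Fin d → ℝ) :
    (1 / 2) * dotp (w - (c - σ *ᵥ -(σᵀ *ᵥ p))) ((σ * σᵀ)⁻¹ *ᵥ (w - (c - σ *ᵥ -(σᵀ *ᵥ p))))
        - dotp (-(σᵀ *ᵥ p)) (-(σᵀ *ᵥ p))
      = (1 / 2) * dotp (w - c) ((σ * σᵀ)⁻¹ *ᵥ (w - c)) - dotp w p + dotp c p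
        - (1 / 2) * dotp (σᵀ *ᵥ p) (σᵀ *ᵥ p) := by
  have hshift : w - (c - σ *ᵥ -(σᵀ *ᵥ p)) = (w - c) - (σ * σᵀ) *ᵥ p := by
    rw [mulVec_neg, mulVec_mulVec]
    abel
  have hsymm : (σ * σᵀ).IsSymm := by
    simp [Matrix.IsSymm, transpose_mul]
  change 1 / 2 * ((w - (c - σ *ᵥ -(σᵀ *ᵥ p))) ⬝ᵥ _) - (-(σᵀ *ᵥ p)) ⬝ᵥ (-(σᵀ *ᵥ p))
    = 1 / 2 * ((w - c) ⬝ᵥ _) - w ⬝ᵥ p + c ⬝ᵥ p - 1 / 2 * ((σᵀ *ᵥ p) ⬝ᵥ (σᵀ *ᵥ p))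
  rw [hshift, dotProduct_inv_mulVec_sub_mulVec hsymm ((isUnit_iff_isUnit_det _).1 hσ.isUnit),
    neg_dotProduct, dotProduct_neg, neg_neg, mulVec_transpose_dotProduct_self, sub_dotProduct w c p]
  ring

theorem action_add_le_tilted_action {d : ℕ} {T t : ℝ} {x : Fin d → ℝ} (ht : 0 ≤ t) (htT : t ≤ T)
    {b : (Fin d → ℝ) → (Fin d → ℝ)} {σ : (Fin d → ℝ) → Matrix (Fin d) (Fin d) ℝ}
    {h : (Fin d → ℝ) → ℝ} (hbC : Continuous b) (hσC : Continuous σ)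
    (haPD : ∀ y, (σ y * (σ y)ᵀ).PosDef) {U : ℝ → (Fin d → ℝ) → ℝ} (hU : C1 U)
    (hUsub : ∀ s y, 0 ≤ s → s ≤ T →
      deriv (fun r => U r y) s + dotp (b y) (gradv (U s) y)
        - (1 / 2) * dotp ((σ y)ᵀ *ᵥ gradv (U s) y) ((σ y)ᵀ *ᵥ gradv (U s) y) ≥ 0)
    (hUT : ∀ y, U T y ≤ h y) {φ φ' : ℝ → (Fin d → ℝ)} (hφt : φ t = x)
    (hφ : ∀ s ∈ Icc t T, φ s = x + ∫ u in t..s, φ' u) (hφ' : IntervalIntegrable φ' volume t T)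
    (hB : IntervalIntegrable (fun s =>
      (1 / 2) * dotp (φ' s - (b (φ s) - σ (φ s) *ᵥ -((σ (φ s))ᵀ *ᵥ gradv (U s) (φ s))))
        ((σ (φ s) * (σ (φ s))ᵀ)⁻¹
          *ᵥ (φ' s - (b (φ s) - σ (φ s) *ᵥ -((σ (φ s))ᵀ *ᵥ gradv (U s) (φ s)))))
      - dotp (-((σ (φ s))ᵀ *ᵥ gradv (U s) (φ s))) (-((σ (φ s))ᵀ *ᵥ gradv (U s) (φ s))))
      volume t T) :
    IntervalIntegrable (fun s => (1 / 2) * dotp (φ' s - b (φ s))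
      ((σ (φ s) * (σ (φ s))ᵀ)⁻¹ *ᵥ (φ' s - b (φ s)))) volume t T ∧
    (∫ s in t..T, (1 / 2) * dotp (φ' s - b (φ s))
        ((σ (φ s) * (σ (φ s))ᵀ)⁻¹ *ᵥ (φ' s - b (φ s)))) + h (φ T) + U t x
      ≤ (∫ s in t..T,
          (1 / 2) * dotp (φ' s - (b (φ s) - σ (φ s) *ᵥ -((σ (φ s))ᵀ *ᵥ gradv (U s) (φ s))))
            ((σ (φ s) * (σ (φ s))ᵀ)⁻¹
              *ᵥ (φ' s - (b (φ s) - σ (φ s) *ᵥ -((σ (φ s))ᵀ *ᵥ gradv (U s) (φ s)))))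
          - dotp (-((σ (φ s))ᵀ *ᵥ gradv (U s) (φ s))) (-((σ (φ s))ᵀ *ᵥ gradv (U s) (φ s))))
        + 2 * h (φ T) := by
  obtain ⟨hF, hFeq⟩ := hU.integral_deriv_comp_eq_sub htT hφ hφ'
  have hφc : ContinuousOn φ (Icc t T) := by
    simpa [uIcc_of_le htT] using
      (absolutelyContinuousOnInterval_of_eq_add_integral htT hφ hφ').continuousOn
  have hHc : Continuous fun q : ℝ × (Fin d → ℝ) =>
      deriv (fun r => U r q.2) q.1 + dotp (b q.2) (gradv (U q.1) q.2)
        - (1 / 2) * dotp ((σ q.2)ᵀ *ᵥ gradv (U q.1) q.2) ((σ q.2)ᵀ *ᵥ gradv (U q.1) q.2) := by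
    have hσp := (hσC.comp continuous_snd).matrix_transpose.matrix_mulVec hU.continuous_gradv
    exact (hU.2.2.1.add ((hbC.comp continuous_snd).dotProduct hU.continuous_gradv)).sub
      (continuous_const.mul (hσp.dotProduct hσp))
  have hH : IntervalIntegrable (fun s => deriv (fun r => U r (φ s)) s
      + dotp (b (φ s)) (gradv (U s) (φ s)) - (1 / 2) * dotp ((σ (φ s))ᵀ *ᵥ gradv (U s) (φ s))
        ((σ (φ s))ᵀ *ᵥ gradv (U s) (φ s))) volume t T :=
    (hHc.comp_continuousOn (continuousOn_id.prodMk hφc)).intervalIntegrable_of_Icc htT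
  -- S-integrand = v₀-integrand + d/ds Ū(s, φ s) - (the subsolution expression, which is ≥ 0)
  have hA : ∀ s, (1 / 2) * dotp (φ' s - b (φ s)) ((σ (φ s) * (σ (φ s))ᵀ)⁻¹ *ᵥ (φ' s - b (φ s)))
      = ((1 / 2) * dotp (φ' s - (b (φ s) - σ (φ s) *ᵥ -((σ (φ s))ᵀ *ᵥ gradv (U s) (φ s))))
          ((σ (φ s) * (σ (φ s))ᵀ)⁻¹
            *ᵥ (φ' s - (b (φ s) - σ (φ s) *ᵥ -((σ (φ s))ᵀ *ᵥ gradv (U s) (φ s)))))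
        - dotp (-((σ (φ s))ᵀ *ᵥ gradv (U s) (φ s))) (-((σ (φ s))ᵀ *ᵥ gradv (U s) (φ s)))
        + (deriv (fun r => U r (φ s)) s + dotp (φ' s) (gradv (U s) (φ s))))
        - (deriv (fun r => U r (φ s)) s + dotp (b (φ s)) (gradv (U s) (φ s))
          - (1 / 2) * dotp ((σ (φ s))ᵀ *ᵥ gradv (U s) (φ s)) ((σ (φ s))ᵀ *ᵥ gradv (U s) (φ s))) :=
    fun s => by
      rw [tilted_cost_eq _ (haPD _)]
      ring
  have hHnonneg := intervalIntegral.integral_nonneg (μ := volume) htT fun s hs =>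
    hUsub s (φ s) (ht.trans hs.1) hs.2
  simp_rw [hA]
  refine ⟨(hB.add hF).sub hH, ?_⟩
  rw [intervalIntegral.integral_sub (hB.add hF) hH, intervalIntegral.integral_add hB hF, hFeq, hφt]
  linarith [hUT (φ T)]

theorem stmt_7_general (d : ℕ) (T : ℝ) (t : ℝ) (x : Fin d → ℝ)
    (ht : 0 ≤ t) (htT : t ≤ T)
    (b : (Fin d → ℝ) → (Fin d → ℝ))
    (σ : (Fin d → ℝ) → Matrix (Fin d) (Fin d) ℝ)
    (h : (Fin d → ℝ) → ℝ)
    (hbC : Continuous b) (hσC : Continuous σ)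
    (haPD : ∀ y, (σ y * (σ y)ᵀ).PosDef)
    (Ubar : ℝ → (Fin d → ℝ) → ℝ)
    (hUreg : C1 Ubar)
    (hUsub : ∀ s y, 0 ≤ s → s ≤ T →
      deriv (fun r => Ubar r y) s
        + dotp (b y) (gradv (Ubar s) y)
        - (1 / 2) * dotp ((σ y)ᵀ *ᵥ gradv (Ubar s) y) ((σ y)ᵀ *ᵥ gradv (Ubar s) y) ≥ 0)
    (hUT : ∀ y, Ubar T y ≤ h y)
    (ubar : ℝ → (Fin d → ℝ) → (Fin d → ℝ))
    (hubar : ∀ s y, ubar s y = -((σ y)ᵀ *ᵥ gradv (Ubar s) y)) :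
    sInf {r : EReal | ∃ φ φ' : ℝ → (Fin d → ℝ),
        φ t = x ∧
        (∀ s ∈ Set.Icc t T, φ s = x + ∫ u in t..s, φ' u) ∧
        IntervalIntegrable φ' MeasureTheory.volume t T ∧
        IntervalIntegrable (fun s => dotp (φ' s) (φ' s)) MeasureTheory.volume t T ∧
        IntervalIntegrable (fun s =>
          (1 / 2) * dotp (φ' s - b (φ s))
            ((σ (φ s) * (σ (φ s))ᵀ)⁻¹ *ᵥ (φ' s - b (φ s)))) MeasureTheory.volume t T ∧
        r = (((∫ s in t..T,
            (1 / 2) * dotp (φ' s - b (φ s))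
              ((σ (φ s) * (σ (φ s))ᵀ)⁻¹ *ᵥ (φ' s - b (φ s))))
          + h (φ T) : ℝ) : EReal)}
      + (Ubar t x : EReal)
    ≤ sInf {r : EReal | ∃ φ φ' : ℝ → (Fin d → ℝ),
        φ t = x ∧
        (∀ s ∈ Set.Icc t T, φ s = x + ∫ u in t..s, φ' u) ∧
        IntervalIntegrable φ' MeasureTheory.volume t T ∧
        IntervalIntegrable (fun s => dotp (φ' s) (φ' s)) MeasureTheory.volume t T ∧
        IntervalIntegrable (fun s =>
          (1 / 2) * dotp (φ' s - (b (φ s) - (σ (φ s)) *ᵥ (ubar s (φ s))))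
            ((σ (φ s) * (σ (φ s))ᵀ)⁻¹
              *ᵥ (φ' s - (b (φ s) - (σ (φ s)) *ᵥ (ubar s (φ s)))))
          - dotp (ubar s (φ s)) (ubar s (φ s))) MeasureTheory.volume t T ∧
        r = (((∫ s in t..T,
            (1 / 2) * dotp (φ' s - (b (φ s) - (σ (φ s)) *ᵥ (ubar s (φ s))))
              ((σ (φ s) * (σ (φ s))ᵀ)⁻¹
                *ᵥ (φ' s - (b (φ s) - (σ (φ s)) *ᵥ (ubar s (φ s)))))
            - dotp (ubar s (φ s)) (ubar s (φ s)))
          + 2 * h (φ T) : ℝ) : EReal)} := by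
  obtain rfl : ubar = fun s y => -((σ y)ᵀ *ᵥ gradv (Ubar s) y) := funext fun s => funext (hubar s)
  refine le_sInf fun r ⟨φ, φ', hφt, hφ, hφ', hφ'sq, hB, hr⟩ => ?_
  obtain ⟨hA, hle⟩ :=
    action_add_le_tilted_action ht htT hbC hσC haPD hUreg hUsub hUT hφt hφ hφ' hB
  rw [hr]
  refine le_trans (add_le_add (sInf_le ⟨φ, φ', hφt, hφ, hφ', hφ'sq, hA, rfl⟩) le_rfl) ?_
  rw [← EReal.coe_add]
  exact EReal.coe_le_coe_iff.2 hle

/-- For a subsolution-based importance sampling control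
`ū = -σᵀ∇Ū`, the variational decay rate `v₀` of the second moment satisfies
`v₀(t,x) ≥ G(t,x) + Ū(t,x)` (infima taken in the extended reals). -/
theorem stmt_7 (d : ℕ) (T : ℝ) (hT : 0 < T) (t : ℝ) (x : Fin d → ℝ)
    (ht : 0 ≤ t) (htT : t ≤ T)
    (b : (Fin d → ℝ) → (Fin d → ℝ))
    (σ : (Fin d → ℝ) → Matrix (Fin d) (Fin d) ℝ)
    (h : (Fin d → ℝ) → ℝ)
    (hbC : Continuous b) (hσC : Continuous σ)
    (haPD : ∀ y, (σ y * (σ y)ᵀ).PosDef)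
    (Ubar : ℝ → (Fin d → ℝ) → ℝ)
    (hUreg : C1 Ubar)
    (hUsub : ∀ s y, 0 ≤ s → s ≤ T →
      deriv (fun r => Ubar r y) s
        + dotp (b y) (gradv (Ubar s) y)
        - (1 / 2) * dotp ((σ y)ᵀ *ᵥ gradv (Ubar s) y) ((σ y)ᵀ *ᵥ gradv (Ubar s) y) ≥ 0)
    (hUT : ∀ y, Ubar T y ≤ h y)
    (ubar : ℝ → (Fin d → ℝ) → (Fin d → ℝ))
    (hubar : ∀ s y, ubar s y = -((σ y)ᵀ *ᵥ gradv (Ubar s) y)) :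
    sInf {r : EReal | ∃ φ φ' : ℝ → (Fin d → ℝ),
        φ t = x ∧
        (∀ s ∈ Set.Icc t T, φ s = x + ∫ u in t..s, φ' u) ∧
        IntervalIntegrable φ' MeasureTheory.volume t T ∧
        IntervalIntegrable (fun s => dotp (φ' s) (φ' s)) MeasureTheory.volume t T ∧
        IntervalIntegrable (fun s =>
          (1 / 2) * dotp (φ' s - b (φ s))
            ((σ (φ s) * (σ (φ s))ᵀ)⁻¹ *ᵥ (φ' s - b (φ s)))) MeasureTheory.volume t T ∧
        r = (((∫ s in t..T,
            (1 / 2) * dotp (φ' s - b (φ s))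
              ((σ (φ s) * (σ (φ s))ᵀ)⁻¹ *ᵥ (φ' s - b (φ s))))
          + h (φ T) : ℝ) : EReal)}
      + (Ubar t x : EReal)
    ≤ sInf {r : EReal | ∃ φ φ' : ℝ → (Fin d → ℝ),
        φ t = x ∧
        (∀ s ∈ Set.Icc t T, φ s = x + ∫ u in t..s, φ' u) ∧
        IntervalIntegrable φ' MeasureTheory.volume t T ∧
        IntervalIntegrable (fun s => dotp (φ' s) (φ' s)) MeasureTheory.volume t T ∧
        IntervalIntegrable (fun s =>
          (1 / 2) * dotp (φ' s - (b (φ s) - (σ (φ s)) *ᵥ (ubar s (φ s))))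
            ((σ (φ s) * (σ (φ s))ᵀ)⁻¹
              *ᵥ (φ' s - (b (φ s) - (σ (φ s)) *ᵥ (ubar s (φ s)))))
          - dotp (ubar s (φ s)) (ubar s (φ s))) MeasureTheory.volume t T ∧
        r = (((∫ s in t..T,
            (1 / 2) * dotp (φ' s - (b (φ s) - (σ (φ s)) *ᵥ (ubar s (φ s))))
              ((σ (φ s) * (σ (φ s))ᵀ)⁻¹
                *ᵥ (φ' s - (b (φ s) - (σ (φ s)) *ᵥ (ubar s (φ s)))))
            - dotp (ubar s (φ s)) (ubar s (φ s)))
          + 2 * h (φ T) : ℝ) : EReal)} :=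
  stmt_7_general d T t x ht htT b σ h hbC hσC haPD Ubar hUreg hUsub hUT ubar hubar
end
end
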